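/- arXiv:2209.14346 — 2 statements merged into one kernel-verified Lean document; each statement's English description precedes it below -/
import Mathlib

section
/- Let μ be a finite Borel measure on ℝ^{n+1}, let R₀ be a Borel set with μ(R₀) > 0, and let {Q_i}_{i∈I} be a countable family of pairwise disjoint Borel subsets of R₀. Let f : ℝ^{n+1} → ℝ^{n+1} be μ-integrable on R₀, let α > 0, ε > 0, let v₀ ∈ ℝ^{n+1}, and for each i let v_i ∈ ℝ^{n+1} satisfy |v_i − v₀| ≥ α. Assume ∫_{R₀} |f − v₀| dμ ≤ ε² μ(R₀) and, for every i ∈ I, ∫_{Q_i} |f − v_i| dμ ≤ ε² μ(Q_i). Then μ(⋃_{i∈I} Q_i) ≤ (2ε²/α) μ(R₀). -/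
/-!
On `Q i` the triangle inequality gives `α ≤ ‖f - v i‖ + ‖f - v₀‖` pointwise. Integrating over `Q i`,
using the oscillation bound there and summing over the disjoint family yields
`α μ(⋃ Q i) ≤ ∫_{⋃ Q i} ‖f - v₀‖ + ε² μ(⋃ Q i) ≤ ∫_{R₀} ‖f - v₀‖ + ε² μ(R₀) ≤ 2ε² μ(R₀)`.
-/

open MeasureTheory Set Function

section

variable {X E ι : Type*} [MeasurableSpace X] [NormedAddCommGroup E]
  {μ : Measure X} [IsFiniteMeasure μ] {f : X → E}

lemma hasSum_measureReal_iUnion [Countable ι] {Q : ι → Set X} (hQ : ∀ i, MeasurableSet (Q i))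
    (hd : Pairwise (Disjoint on Q)) : HasSum (fun i ↦ μ.real (Q i)) (μ.real (⋃ i, Q i)) := by
  simpa using hasSum_integral_iUnion hQ hd (integrableOn_const (C := (1 : ℝ)) (measure_ne_top μ _))

lemma MeasureTheory.IntegrableOn.norm_sub_const {s : Set X} (hf : IntegrableOn f s μ) (u : E) :
    IntegrableOn (fun x ↦ ‖f x - u‖) s μ :=
  (hf.sub (integrableOn_const (measure_ne_top μ s))).norm

lemma mul_measureReal_le_setIntegral_norm_sub_add {s : Set X} (hf : IntegrableOn f s μ)
    {α : ℝ} {v w : E} (hvw : α ≤ ‖w - v‖) :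
    α * μ.real s ≤ ∫ x in s, ‖f x - w‖ ∂μ + ∫ x in s, ‖f x - v‖ ∂μ := by
  have htri : ∀ x, α ≤ ‖f x - w‖ + ‖f x - v‖ := fun x ↦ calc
    α ≤ ‖w - v‖ := hvw
    _ ≤ ‖w - f x‖ + ‖f x - v‖ := norm_sub_le_norm_sub_add_norm_sub _ _ _
    _ = ‖f x - w‖ + ‖f x - v‖ := by rw [norm_sub_rev]
  calc α * μ.real s = ∫ _ in s, α ∂μ := by rw [setIntegral_const, smul_eq_mul, mul_comm]
    _ ≤ ∫ x in s, (‖f x - w‖ + ‖f x - v‖) ∂μ :=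
      setIntegral_mono (integrableOn_const (measure_ne_top μ s))
        ((hf.norm_sub_const w).add (hf.norm_sub_const v)) htri
    _ = _ := integral_add (hf.norm_sub_const w) (hf.norm_sub_const v)

lemma mul_measureReal_iUnion_le_setIntegral_norm_sub_add [Countable ι] {Q : ι → Set X}
    (hQ : ∀ i, MeasurableSet (Q i)) (hd : Pairwise (Disjoint on Q))
    (hf : IntegrableOn f (⋃ i, Q i) μ) {α c : ℝ} {v : E} {w : ι → E} (hw : ∀ i, α ≤ ‖w i - v‖)
    (hosc : ∀ i, ∫ x in Q i, ‖f x - w i‖ ∂μ ≤ c * μ.real (Q i)) :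
    α * μ.real (⋃ i, Q i) ≤ ∫ x in ⋃ i, Q i, ‖f x - v‖ ∂μ + c * μ.real (⋃ i, Q i) := by
  have hμ := hasSum_measureReal_iUnion (μ := μ) hQ hd
  have hint := hasSum_integral_iUnion hQ hd (hf.norm_sub_const v)
  refine hasSum_le (fun i ↦ ?_) (hμ.mul_left α) (hint.add (hμ.mul_left c))
  have := mul_measureReal_le_setIntegral_norm_sub_add
    (hf.mono_set (subset_iUnion Q i)) (hw i)
  linarith [hosc i]

end

theorem bigSlope_stopping_bound_general (n : ℕ)
    (μ : Measure (EuclideanSpace ℝ (Fin (n + 1)))) [IsFiniteMeasure μ]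
    (R₀ : Set (EuclideanSpace ℝ (Fin (n + 1))))
    (I : Type*) [Countable I] (Q : I → Set (EuclideanSpace ℝ (Fin (n + 1))))
    (hQmeas : ∀ i, MeasurableSet (Q i)) (hQsub : ∀ i, Q i ⊆ R₀)
    (hQdisj : ∀ i j, i ≠ j → Disjoint (Q i) (Q j))
    (f : EuclideanSpace ℝ (Fin (n + 1)) → EuclideanSpace ℝ (Fin (n + 1)))
    (hf : IntegrableOn f R₀ μ)
    (α ε : ℝ) (hα : 0 < α)
    (v₀ : EuclideanSpace ℝ (Fin (n + 1))) (v : I → EuclideanSpace ℝ (Fin (n + 1)))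
    (hv : ∀ i, α ≤ ‖v i - v₀‖)
    (hosc₀ : ∫ x in R₀, ‖f x - v₀‖ ∂μ ≤ ε ^ 2 * (μ R₀).toReal)
    (hosc : ∀ i, ∫ x in Q i, ‖f x - v i‖ ∂μ ≤ ε ^ 2 * (μ (Q i)).toReal) :
    (μ (⋃ i, Q i)).toReal ≤ 2 * ε ^ 2 / α * (μ R₀).toReal := by
  simp only [← measureReal_def] at hosc₀ hosc ⊢
  have hUR₀ : ⋃ i, Q i ⊆ R₀ := iUnion_subset hQsub
  have hU := mul_measureReal_iUnion_le_setIntegral_norm_sub_add hQmeas hQdisj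
    (hf.mono_set hUR₀) hv hosc
  have hint : ∫ x in ⋃ i, Q i, ‖f x - v₀‖ ∂μ ≤ ∫ x in R₀, ‖f x - v₀‖ ∂μ :=
    setIntegral_mono_set (hf.norm_sub_const v₀) (.of_forall fun _ ↦ norm_nonneg _)
      hUR₀.eventuallyLE
  have hμ : μ.real (⋃ i, Q i) ≤ μ.real R₀ := measureReal_mono hUR₀
  rw [div_mul_eq_mul_div, le_div_iff₀ hα]
  linarith [mul_le_mul_of_nonneg_left hμ (sq_nonneg ε)]

/-- **Measure-theoretic core of Lemma 3.2** of Tolsa–Toro, "The two-phase problem for harmonic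
measure in VMO and the chord-arc condition": if `f` has mean oscillation `≤ ε²` around `v₀` on
`R₀` and around `v i` on each of the pairwise disjoint subsets `Q i ⊆ R₀`, and each `v i` is
`α`-far from `v₀`, then `μ(⋃ i, Q i) ≤ (2ε²/α) μ(R₀)`. -/
theorem bigSlope_stopping_bound (n : ℕ)
    (μ : Measure (EuclideanSpace ℝ (Fin (n + 1)))) [IsFiniteMeasure μ]
    (R₀ : Set (EuclideanSpace ℝ (Fin (n + 1)))) (hR₀ : MeasurableSet R₀)
    (hμR₀ : 0 < μ R₀)
    (I : Type*) [Countable I] (Q : I → Set (EuclideanSpace ℝ (Fin (n + 1))))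
    (hQmeas : ∀ i, MeasurableSet (Q i)) (hQsub : ∀ i, Q i ⊆ R₀)
    (hQdisj : ∀ i j, i ≠ j → Disjoint (Q i) (Q j))
    (f : EuclideanSpace ℝ (Fin (n + 1)) → EuclideanSpace ℝ (Fin (n + 1)))
    (hf : IntegrableOn f R₀ μ)
    (α ε : ℝ) (hα : 0 < α) (hε : 0 < ε)
    (v₀ : EuclideanSpace ℝ (Fin (n + 1))) (v : I → EuclideanSpace ℝ (Fin (n + 1)))
    (hv : ∀ i, α ≤ ‖v i - v₀‖)
    (hosc₀ : ∫ x in R₀, ‖f x - v₀‖ ∂μ ≤ ε ^ 2 * (μ R₀).toReal)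
    (hosc : ∀ i, ∫ x in Q i, ‖f x - v i‖ ∂μ ≤ ε ^ 2 * (μ (Q i)).toReal) :
    (μ (⋃ i, Q i)).toReal ≤ 2 * ε ^ 2 / α * (μ R₀).toReal :=
  bigSlope_stopping_bound_general n μ R₀ I Q hQmeas hQsub hQdisj f hf α ε hα v₀ v hv hosc₀ hosc
end

section
/- Let f : ℝⁿ → ℝ be 1-Lipschitz with graph Γ = {(x, f(x)) : x ∈ ℝⁿ} ⊆ ℝ^{n+1}, let G ⊆ Γ, let x₀ ∈ ℝ^{n+1} and R > 0, and let {B(x_i, r_i)}_{i∈I} be a countable family of pairwise disjoint balls contained in B(x₀, R), each disjoint from G, and such that B(x_i, r_i/2) ∩ Γ ≠ ∅ for every i. Then Σ_{i∈I} r_iⁿ ≤ C(n) ℋⁿ(Γ ∩ B(x₀, R) \ G), where C(n) depends only on n. -/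
/-!
Projecting the graph `Γ` of a `K`-Lipschitz function onto `ℝⁿ` is `1`-Lipschitz and the graph
map `z ↦ (z, f z)` is `√(1 + K²)`-Lipschitz, so `Γ ∩ B(y, ρ)` projects onto a set containing the
`n`-ball of radius `ρ / √(1 + K²)` about the projection of `y ∈ Γ`. Hence `ℋⁿ(Γ ∩ B(y, ρ)) ≳ ρⁿ`.
A ball `B(xᵢ, rᵢ)` with `B(xᵢ, rᵢ/2) ∩ Γ ≠ ∅` contains such a ball `B(y, rᵢ/2)`, and the balls
`B(xᵢ, rᵢ)` are disjoint subsets of `B(x₀, R) \ G`, so summing gives the packing bound.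
-/

open Metric Set MeasureTheory

/-- The graph `Γ = {(x, f(x)) : x ∈ ℝⁿ} ⊆ ℝ^{n+1}` of a function `f : ℝⁿ → ℝ`, where
`ℝ^{n+1}` is identified with `ℝⁿ × ℝ` via the first `n` coordinates and the last one. -/
def graphSet (n : ℕ) (f : EuclideanSpace ℝ (Fin n) → ℝ) :
    Set (EuclideanSpace ℝ (Fin (n + 1))) :=
  {p | p (Fin.last n) = f (WithLp.toLp 2 (fun i : Fin n => p (Fin.castSucc i)))}

open scoped ENNReal NNReal

/-- `s` need not be measurable (only the `B i` are), hence the detour through `μ.restrict s`. -/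
theorem tsum_measure_inter_le_measure {α ι : Type*} [MeasurableSpace α] (μ : Measure α)
    (s : Set α) {B : ι → Set α} (hB : ∀ i, MeasurableSet (B i))
    (hd : Pairwise (Function.onFun Disjoint B)) : ∑' i, μ (s ∩ B i) ≤ μ s := by
  calc ∑' i, μ (s ∩ B i) = ∑' i, μ.restrict s (B i) := by
        simp only [Measure.restrict_apply (hB _), inter_comm]
    _ ≤ μ.restrict s (⋃ i, B i) := tsum_meas_le_meas_iUnion_of_disjoint _ hB hd
    _ ≤ μ.restrict s univ := measure_mono (subset_univ _)
    _ = μ s := Measure.restrict_apply_univ s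

instance isAddHaarMeasure_hausdorffMeasure_euclideanSpace (n : ℕ) :
    (μH[(n : ℝ)] : Measure (EuclideanSpace ℝ (Fin n))).IsAddHaarMeasure := by
  simpa only [finrank_euclideanSpace_fin] using
    isAddHaarMeasure_hausdorffMeasure (E := EuclideanSpace ℝ (Fin n))

namespace LipschitzGraph

variable {n : ℕ} {f : EuclideanSpace ℝ (Fin n) → ℝ}

def dropLast (p : EuclideanSpace ℝ (Fin (n + 1))) : EuclideanSpace ℝ (Fin n) :=
  WithLp.toLp 2 fun i => p i.castSucc

def graphMap (f : EuclideanSpace ℝ (Fin n) → ℝ) (z : EuclideanSpace ℝ (Fin n)) :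
    EuclideanSpace ℝ (Fin (n + 1)) :=
  WithLp.toLp 2 (Fin.snoc (α := fun _ => ℝ) z.ofLp (f z))

@[simp]
theorem graphMap_castSucc (z : EuclideanSpace ℝ (Fin n)) (i : Fin n) :
    graphMap f z i.castSucc = z i := by
  simp [graphMap]

@[simp]
theorem graphMap_last (z : EuclideanSpace ℝ (Fin n)) : graphMap f z (Fin.last n) = f z := by
  simp [graphMap]

@[simp]
theorem dropLast_graphMap (z : EuclideanSpace ℝ (Fin n)) : dropLast (graphMap f z) = z := by
  ext i
  simp [dropLast]

theorem graphMap_mem (z : EuclideanSpace ℝ (Fin n)) : graphMap f z ∈ graphSet n f := by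
  change graphMap f z (Fin.last n) = f (dropLast (graphMap f z))
  simp

theorem graphMap_dropLast {y : EuclideanSpace ℝ (Fin (n + 1))} (hy : y ∈ graphSet n f) :
    graphMap f (dropLast y) = y := by
  ext j
  induction j using Fin.lastCases with
  | last => exact (graphMap_last _).trans hy.symm
  | cast i => exact graphMap_castSucc _ i

theorem lipschitzWith_dropLast : LipschitzWith 1 (dropLast (n := n)) := by
  refine LipschitzWith.of_dist_le_mul fun p q => ?_
  rw [NNReal.coe_one, one_mul, EuclideanSpace.dist_eq, EuclideanSpace.dist_eq,
    Fin.sum_univ_castSucc]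
  exact Real.sqrt_le_sqrt (le_add_of_nonneg_right (sq_nonneg _))

theorem dist_graphMap_le {K : ℝ≥0} (hf : LipschitzWith K f) (z w : EuclideanSpace ℝ (Fin n)) :
    dist (graphMap f z) (graphMap f w) ≤ √(1 + K ^ 2) * dist z w := by
  have hfzw : dist (f z) (f w) ≤ K * dist z w := hf.dist_le_mul z w
  have hsq : dist (graphMap f z) (graphMap f w) = √(dist z w ^ 2 + dist (f z) (f w) ^ 2) := by
    rw [EuclideanSpace.dist_eq, EuclideanSpace.dist_eq, Fin.sum_univ_castSucc,
      Real.sq_sqrt (by positivity)]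
    simp only [graphMap_castSucc, graphMap_last]
  calc dist (graphMap f z) (graphMap f w) ≤ √((1 + K ^ 2) * dist z w ^ 2) := by
        rw [hsq]
        refine Real.sqrt_le_sqrt ?_
        nlinarith [pow_le_pow_left₀ dist_nonneg hfzw 2]
    _ = √(1 + K ^ 2) * dist z w := by
        rw [Real.sqrt_mul (by positivity), Real.sqrt_sq dist_nonneg]

theorem ball_subset_image_dropLast {K : ℝ≥0} (hf : LipschitzWith K f)
    {y : EuclideanSpace ℝ (Fin (n + 1))} (hy : y ∈ graphSet n f) (ρ : ℝ) :
    ball (dropLast y) (ρ / √(1 + K ^ 2)) ⊆ dropLast '' (graphSet n f ∩ ball y ρ) := by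
  intro z hz
  have hM : 0 < √(1 + K ^ 2) := by positivity
  refine ⟨graphMap f z, ⟨graphMap_mem z, ?_⟩, dropLast_graphMap z⟩
  calc dist (graphMap f z) y = dist (graphMap f z) (graphMap f (dropLast y)) := by
        rw [graphMap_dropLast hy]
    _ ≤ √(1 + K ^ 2) * dist z (dropLast y) := dist_graphMap_le hf _ _
    _ < √(1 + K ^ 2) * (ρ / √(1 + K ^ 2)) := mul_lt_mul_of_pos_left (mem_ball.1 hz) hM
    _ = ρ := mul_div_cancel₀ ρ hM.ne'

theorem hausdorffMeasure_ball_le {K : ℝ≥0} (hf : LipschitzWith K f)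
    {y : EuclideanSpace ℝ (Fin (n + 1))} (hy : y ∈ graphSet n f) (ρ : ℝ) :
    μH[(n : ℝ)] (ball (dropLast y) (ρ / √(1 + K ^ 2))) ≤ μH[(n : ℝ)] (graphSet n f ∩ ball y ρ) :=
  calc μH[(n : ℝ)] (ball (dropLast y) (ρ / √(1 + K ^ 2)))
      ≤ μH[(n : ℝ)] (dropLast '' (graphSet n f ∩ ball y ρ)) :=
        measure_mono (ball_subset_image_dropLast hf hy ρ)
    _ ≤ μH[(n : ℝ)] (graphSet n f ∩ ball y ρ) := by
        simpa using lipschitzWith_dropLast.hausdorffMeasure_image_le (Nat.cast_nonneg n) _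

end LipschitzGraph

/-- Lower density constant of a `K`-Lipschitz graph in balls whose concentric half ball meets it. -/
noncomputable def graphBallConst (n : ℕ) (K : ℝ≥0) : ℝ≥0∞ :=
  ENNReal.ofReal ((2 * √(1 + K ^ 2))⁻¹ ^ n) *
    μH[(n : ℝ)] (ball (0 : EuclideanSpace ℝ (Fin n)) 1)

theorem graphBallConst_ne_zero (n : ℕ) (K : ℝ≥0) : graphBallConst n K ≠ 0 :=
  mul_ne_zero (ENNReal.ofReal_pos.2 (by positivity)).ne' (measure_ball_pos _ 0 one_pos).ne'

theorem graphBallConst_ne_top (n : ℕ) (K : ℝ≥0) : graphBallConst n K ≠ ∞ :=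
  ENNReal.mul_ne_top ENNReal.ofReal_ne_top measure_ball_lt_top.ne

open LipschitzGraph in
theorem ofReal_pow_mul_graphBallConst_le {n : ℕ} {K : ℝ≥0} {f : EuclideanSpace ℝ (Fin n) → ℝ}
    (hf : LipschitzWith K f) {x : EuclideanSpace ℝ (Fin (n + 1))} {r : ℝ}
    (hx : (ball x (r / 2) ∩ graphSet n f).Nonempty) :
    ENNReal.ofReal (r ^ n) * graphBallConst n K ≤ μH[(n : ℝ)] (graphSet n f ∩ ball x r) := by
  obtain ⟨y, hyx, hy⟩ := hx
  have hr : 0 < r := by linarith [dist_nonneg.trans_lt (mem_ball.1 hyx)]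
  have hball : ball y (r / 2) ⊆ ball x r :=
    ball_subset_ball' (by linarith [mem_ball.1 hyx])
  have hvol : ENNReal.ofReal (r ^ n) * graphBallConst n K
      = μH[(n : ℝ)] (ball (dropLast y) (r / 2 / √(1 + K ^ 2))) := by
    rw [Measure.addHaar_ball_of_pos _ _ (by positivity), finrank_euclideanSpace_fin,
      graphBallConst, ← mul_assoc, ← ENNReal.ofReal_mul (by positivity), ← mul_pow]
    congr 3
    ring
  rw [hvol]
  exact (hausdorffMeasure_ball_le hf hy _).trans (measure_mono (inter_subset_inter_right _ hball))

/-- **Packing inequality (4.23) of Tolsa–Toro**: if `f : ℝⁿ → ℝ` is `1`-Lipschitz with graph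
`Γ`, `G ⊆ Γ`, and `{B(x_i, r_i)}_{i}` is a countable family of pairwise disjoint balls
contained in `B(x₀, R)`, each disjoint from `G`, and with `B(x_i, r_i/2) ∩ Γ ≠ ∅`, then
`Σ_i r_iⁿ ≤ C(n) ℋⁿ(Γ ∩ B(x₀,R) \ G)`. -/
theorem packing_balls_on_graph (n : ℕ) :
    ∃ C : ℝ, 0 < C ∧
      ∀ f : EuclideanSpace ℝ (Fin n) → ℝ, LipschitzWith 1 f →
      ∀ G : Set (EuclideanSpace ℝ (Fin (n + 1))), G ⊆ graphSet n f →
      ∀ (x₀ : EuclideanSpace ℝ (Fin (n + 1))) (R : ℝ), 0 < R →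
      ∀ (I : Type) (_ : Countable I)
        (x : I → EuclideanSpace ℝ (Fin (n + 1))) (r : I → ℝ),
        (∀ i j, i ≠ j → Disjoint (ball (x i) (r i)) (ball (x j) (r j))) →
        (∀ i, ball (x i) (r i) ⊆ ball x₀ R) →
        (∀ i, Disjoint (ball (x i) (r i)) G) →
        (∀ i, (ball (x i) (r i / 2) ∩ graphSet n f).Nonempty) →
        ∑' i, ENNReal.ofReal (r i ^ n)
          ≤ ENNReal.ofReal C * μH[(n : ℝ)] ((graphSet n f ∩ ball x₀ R) \ G) := by
  set c := graphBallConst n 1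
  have hc : c ≠ 0 := graphBallConst_ne_zero n 1
  have hc' : c ≠ ∞ := graphBallConst_ne_top n 1
  refine ⟨c.toReal⁻¹, inv_pos.2 (ENNReal.toReal_pos hc hc'), ?_⟩
  intro f hf G _ x₀ R _ I _ x r hdisj hsub hG hne
  set s := (graphSet n f ∩ ball x₀ R) \ G
  have hpiece : ∀ i, graphSet n f ∩ ball (x i) (r i) ⊆ s ∩ ball (x i) (r i) :=
    fun i p ⟨hpΓ, hp⟩ => ⟨⟨⟨hpΓ, hsub i hp⟩, disjoint_left.1 (hG i) hp⟩, hp⟩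
  have hsum : (∑' i, ENNReal.ofReal (r i ^ n)) * c ≤ μH[(n : ℝ)] s :=
    calc (∑' i, ENNReal.ofReal (r i ^ n)) * c
        = ∑' i, ENNReal.ofReal (r i ^ n) * c := ENNReal.tsum_mul_right.symm
      _ ≤ ∑' i, μH[(n : ℝ)] (s ∩ ball (x i) (r i)) := ENNReal.tsum_le_tsum fun i =>
          (ofReal_pow_mul_graphBallConst_le hf (hne i)).trans (measure_mono (hpiece i))
      _ ≤ μH[(n : ℝ)] s :=
          tsum_measure_inter_le_measure _ s (fun _ => measurableSet_ball) hdisj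
  rw [ENNReal.ofReal_inv_of_pos (ENNReal.toReal_pos hc hc'), ENNReal.ofReal_toReal hc',
    ← ENNReal.div_eq_inv_mul]
  exact (ENNReal.le_div_iff_mul_le (Or.inl hc) (Or.inl hc')).2 hsum
end
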